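/- Assume R is a Frobenius extension of A, i.e. there exist an A-bimodule map ν̄ : R → A (meaning ν̄(i(a)·r·i(a')) = a·ν̄(r)·a' for all a, a' ∈ A, r ∈ R) and finitely many elements e¹_1, …, e¹_n, e²_1, …, e²_n ∈ R such that for all r ∈ R: Σ_j i(ν̄(r·e¹_j))·e²_j = r and Σ_j e¹_j·i(ν̄(e²_j·r)) = r. Then the map α : A → R, α(a) = Σ_j i(a)·i(χ(e¹_j))·e²_j, is a bijection from A onto Q, its inverse is the restriction of ν̄ to Q, and α(a·b) = α(a)·i(b) for all a ∈ A and b ∈ B. -/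
import Mathlib


/-!
If `R/A` is a Frobenius extension, with Frobenius system `(Σ e¹_j ⊗ e²_j, ν̄)`, then
`α : A → R`, `α a = Σ_j i a * i (χ e¹_j) * e²_j`, is a bijection from `A` onto `Q`
with inverse the restriction of `ν̄`, and `α (a * b) = α a * i b` for `b ∈ B`.
-/

theorem frobenius_A_iso_Q
    {A R : Type*} [Ring A] [Ring R] (i : A →+* R) (χ : R → A)
    (hadd : ∀ r s : R, χ (r + s) = χ r + χ s)
    (h1 : ∀ (r : R) (a : A), χ (r * i a) = χ r * a)
    (h2 : ∀ r s : R, χ (i (χ r) * s) = χ (r * s))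
    (h3 : χ 1 = 1)
    (B : Set A) (hB : B = {b : A | ∀ r : R, b * χ r = χ (i b * r)})
    (Q : Set R) (hQ : Q = {q : R | ∀ r : R, q * r = q * i (χ r)})
    -- Frobenius system for R/A
    (ν : R → A)
    (hνadd : ∀ r s : R, ν (r + s) = ν r + ν s)
    (hνbimod : ∀ (a a' : A) (r : R), ν (i a * r * i a') = a * ν r * a')
    (n : ℕ) (e₁ e₂ : Fin n → R)
    (hdual₁ : ∀ r : R, ∑ j, i (ν (r * e₁ j)) * e₂ j = r)
    (hdual₂ : ∀ r : R, ∑ j, e₁ j * i (ν (e₂ j * r)) = r)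
    -- the map α
    (α : A → R) (hα : ∀ a : A, α a = ∑ j, i a * i (χ (e₁ j)) * e₂ j) :
    -- α takes values in Q
    (∀ a : A, α a ∈ Q) ∧
    -- ν̄ restricted to Q is a two-sided inverse of α
    (∀ a : A, ν (α a) = a) ∧
    (∀ q ∈ Q, α (ν q) = q) ∧
    -- in particular α : A → Q is bijective
    (∀ a a' : A, α a = α a' → a = a') ∧
    (∀ q ∈ Q, ∃ a : A, α a = q) ∧
    -- α is right B-linear
    (∀ (a : A), ∀ b ∈ B, α (a * b) = α a * i b) := by
  have hχ0 : χ 0 = 0 := by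
    have := h1 0 0
    simpa using this
  have hν0 : ν 0 = 0 := by
    have := hνbimod 0 0 0
    simpa using this
  let χ' : R →+ A := ⟨⟨χ, hχ0⟩, hadd⟩
  let ν' : R →+ A := ⟨⟨ν, hν0⟩, hνadd⟩
  have hχ' : ∀ r, χ' r = χ r := fun _ => rfl
  have hν' : ∀ r, ν' r = ν r := fun _ => rfl
  -- ν of a left A-multiple
  have hνl : ∀ (a : A) (r : R), ν (i a * r) = a * ν r := by
    intro a r
    have := hνbimod a 1 r
    simpa using this
  have hνr : ∀ (r : R) (a : A), ν (r * i a) = ν r * a := by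
    intro r a
    have := hνbimod 1 a r
    simpa using this
  -- key identity: ∑ χ(e₁ j) ν(e₂ j s) = χ s
  have L : ∀ s : R, ∑ j, χ (e₁ j) * ν (e₂ j * s) = χ s := by
    intro s
    calc ∑ j, χ (e₁ j) * ν (e₂ j * s)
        = ∑ j, χ' (e₁ j * i (ν (e₂ j * s))) := by
          refine Finset.sum_congr rfl fun j _ => ?_
          rw [hχ', h1]
      _ = χ' (∑ j, e₁ j * i (ν (e₂ j * s))) := (map_sum χ' _ _).symm
      _ = χ s := by rw [hdual₂ s, hχ']
  -- formula for α a * r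
  have hαr : ∀ (a : A) (r : R), α a * r = ∑ k, i a * i (χ (r * e₁ k)) * e₂ k := by
    intro a r
    rw [hα]
    calc (∑ j, i a * i (χ (e₁ j)) * e₂ j) * r
        = ∑ j, i a * (i (χ (e₁ j)) * (e₂ j * r)) := by
          rw [Finset.sum_mul]
          exact Finset.sum_congr rfl fun j _ => by simp only [mul_assoc]
      _ = ∑ j, ∑ k, i a * (i (χ (e₁ j) * ν (e₂ j * (r * e₁ k))) * e₂ k) := by
          refine Finset.sum_congr rfl fun j _ => ?_
          rw [← hdual₁ (e₂ j * r), Finset.mul_sum, Finset.mul_sum]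
          refine Finset.sum_congr rfl fun k _ => ?_
          simp only [map_mul, mul_assoc]
      _ = ∑ k, ∑ j, i a * (i (χ (e₁ j) * ν (e₂ j * (r * e₁ k))) * e₂ k) := Finset.sum_comm
      _ = ∑ k, i a * i (χ (r * e₁ k)) * e₂ k := by
          refine Finset.sum_congr rfl fun k _ => ?_
          rw [← L (r * e₁ k)]
          simp only [map_sum, Finset.sum_mul, Finset.mul_sum, mul_assoc]
  -- α a ∈ Q
  have hmem : ∀ a : A, α a ∈ Q := by
    intro a
    rw [hQ]
    intro r
    rw [hαr, hαr]
    refine Finset.sum_congr rfl fun k _ => ?_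
    rw [h2]
  -- ν ∘ α = id
  have hνα : ∀ a : A, ν (α a) = a := by
    intro a
    rw [hα, ← hν', map_sum]
    have : ∀ j : Fin n, ν' (i a * i (χ (e₁ j)) * e₂ j) = a * (χ (e₁ j) * ν (e₂ j * 1)) := by
      intro j
      rw [hν', ← map_mul, hνl, mul_one, mul_assoc]
    rw [Finset.sum_congr rfl fun j _ => this j, ← Finset.mul_sum, L 1, h3, mul_one]
  -- α ∘ ν = id on Q
  have hαν : ∀ q ∈ Q, α (ν q) = q := by
    intro q hq
    rw [hQ] at hq
    rw [hα]
    conv_rhs => rw [← hdual₁ q]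
    refine Finset.sum_congr rfl fun j _ => ?_
    rw [hq (e₁ j), hνr, map_mul]
  exact ⟨hmem, hνα, hαν,
    fun a a' h => by rw [← hνα a, ← hνα a', h],
    fun q hq => ⟨ν q, hαν q hq⟩,
    fun a b hb => by
      rw [hB] at hb
      rw [hαr a (i b), hα]
      refine Finset.sum_congr rfl fun j _ => ?_
      rw [← hb (e₁ j)]
      simp only [map_mul, mul_assoc]⟩
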